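/- For every real p > 1, every nonzero real T, and all integers r ≥ 1, c ≥ 1, t ≥ 1: ∑_{b ∈ {1,…,r+1}^c} μ_p(r+1; b) · T^{−t·min{r+1, b_1, …, b_c}} = T^{−t} · ∑_{b ∈ {1,…,r}^c} μ_p(r; b) · T^{−t·min{r, b_1, …, b_c}} + T^{−t} · p^{cr} (1 − p^{−c}). -/

import Mathlib

open Finset

noncomputable section

/-- `μ_p(a,b)`: the measure of elements of `pℤ_p/(p^a)` of valuation `b` (for `1 ≤ b ≤ a`). -/
def mu (p : ℝ) (a b : ℕ) : ℝ := if b = a then 1 else p ^ (a - b) * (1 - p⁻¹)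

/-- `μ_p(a; b) = ∏_j μ_p(a, b_j)` for a tuple `b`. -/
def muV (p : ℝ) (a : ℕ) {k : ℕ} (b : Fin k → ℕ) : ℝ := ∏ j, mu p a (b j)

/-- `mins r f = min{r, f 0, …, f (k-1)}`. -/
def mins (r : ℕ) {k : ℕ} (f : Fin k → ℕ) : ℕ := (List.ofFn f).foldr min r

/-! Split `{1,…,r+1}^c` into the tuples with all entries `≥ 2` and the rest. Lowering every
entry by one maps the first part onto `{1,…,r}^c`, preserves `μ_p` and lowers the minimum by one,
which produces the factor `T^{-t}`. On the rest the minimum is `1`, and the total mass there is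
`p^{cr} - p^{c(r-1)} = p^{cr}(1 - p^{-c})`, because `∑_{b=1}^{n+1} μ_p(n+1,b) = p^n`. -/

theorem List.le_foldr_min_iff {α : Type*} [LinearOrder α] (l : List α) {r m : α} :
    m ≤ l.foldr min r ↔ m ≤ r ∧ ∀ x ∈ l, m ≤ x := by
  induction l with
  | nil => simp
  | cons a l ih => simp only [List.foldr_cons, le_min_iff, ih, List.forall_mem_cons, and_left_comm]

theorem List.foldr_min_map_of_monotone {α β : Type*} [LinearOrder α] [LinearOrder β]
    {f : α → β} (hf : Monotone f) (l : List α) (r : α) :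
    (l.map f).foldr min (f r) = f (l.foldr min r) := by
  induction l with
  | nil => rfl
  | cons a l ih => simp [ih, hf.map_min]

theorem Fintype.sum_piFinset_Icc_add_one {ι M : Type*} [Fintype ι] [DecidableEq ι]
    [AddCommMonoid M] (k n : ℕ) (g : (ι → ℕ) → M) :
    ∑ b ∈ piFinset (fun _ : ι => Icc (k + 1) (n + 1)), g b =
      ∑ b ∈ piFinset (fun _ : ι => Icc k n), g (fun i => b i + 1) := by
  have h := map_add_right_Icc (fun _ : ι => k) (fun _ => n) 1
  simp only [Pi.Icc_eq, Pi.add_apply, Pi.one_apply] at h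
  rw [← h, sum_map]
  rfl

section

variable {k : ℕ}

theorem mu_add_one_add_one (p : ℝ) (a b : ℕ) : mu p (a + 1) (b + 1) = mu p a b := by
  simp [mu]

theorem muV_add_one (p : ℝ) (a : ℕ) (b : Fin k → ℕ) :
    muV p (a + 1) (fun j => b j + 1) = muV p a b := by
  simp only [muV, mu_add_one_add_one]

theorem sum_Icc_mu {p : ℝ} (hp : p ≠ 0) (n : ℕ) :
    ∑ b ∈ Icc 1 (n + 1), mu p (n + 1) b = p ^ n := by
  induction n with
  | zero => simp [mu]
  | succ n ih =>
    rw [← insert_Icc_add_one_left_eq_Icc (by omega), sum_insert (by simp),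
      ← map_add_right_Icc 1 (n + 1) 1, sum_map]
    simp only [addRightEmbedding_apply, mu_add_one_add_one, ih]
    rw [mu, if_neg (by omega), Nat.sub_zero]
    field_simp
    ring

theorem sum_piFinset_muV (p : ℝ) (a : ℕ) (s : Finset ℕ) :
    ∑ b ∈ Fintype.piFinset (fun _ : Fin k => s), muV p a b = (∑ b ∈ s, mu p a b) ^ k := by
  simp only [muV, ← prod_univ_sum, prod_const, card_univ, Fintype.card_fin]

theorem le_mins_iff {r m : ℕ} {f : Fin k → ℕ} : m ≤ mins r f ↔ m ≤ r ∧ ∀ j, m ≤ f j := by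
  simp [mins, List.le_foldr_min_iff]

theorem mins_add_one (r : ℕ) (f : Fin k → ℕ) :
    mins (r + 1) (fun j => f j + 1) = mins r f + 1 := by
  rw [mins, mins, ← List.foldr_min_map_of_monotone (f := (· + 1)) add_left_mono, List.map_ofFn]
  rfl

theorem mins_eq_of_apply_eq {r m : ℕ} {f : Fin k → ℕ} (hr : m ≤ r) (hf : ∀ j, m ≤ f j)
    {j : Fin k} (hj : f j = m) : mins r f = m :=
  le_antisymm (hj ▸ (le_mins_iff.1 le_rfl).2 j) (le_mins_iff.2 ⟨hr, hf⟩)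

theorem sum_muV_mul_pow_mins_succ {p : ℝ} (hp : p ≠ 0) {r : ℕ} (hr : 1 ≤ r) (c : ℕ) (x : ℝ) :
    ∑ b ∈ Fintype.piFinset (fun _ : Fin c => Icc 1 (r + 1)),
        muV p (r + 1) b * x ^ mins (r + 1) b =
      x * ∑ b ∈ Fintype.piFinset (fun _ : Fin c => Icc 1 r), muV p r b * x ^ mins r b +
        x * p ^ (c * r) * (1 - (p ^ c)⁻¹) := by
  obtain ⟨m, rfl⟩ : ∃ m, r = m + 1 := ⟨r - 1, by omega⟩
  set A := Fintype.piFinset (fun _ : Fin c => Icc 1 (m + 2))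
  set B := Fintype.piFinset (fun _ : Fin c => Icc 2 (m + 2))
  have hBA : B ⊆ A := Fintype.piFinset_subset _ _ fun _ => Icc_subset_Icc_left (by omega)
  have hB : ∑ b ∈ B, muV p (m + 2) b * x ^ mins (m + 2) b =
      x * ∑ b ∈ Fintype.piFinset (fun _ : Fin c => Icc 1 (m + 1)),
        muV p (m + 1) b * x ^ mins (m + 1) b := by
    rw [Fintype.sum_piFinset_Icc_add_one 1 (m + 1), mul_sum]
    refine sum_congr rfl fun b _ => ?_
    rw [muV_add_one, mins_add_one, pow_succ]
    ring
  -- off `B` some coordinate equals 1, so the minimum is 1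
  have hmins : ∀ b ∈ A \ B, muV p (m + 2) b * x ^ mins (m + 2) b = x * muV p (m + 2) b := by
    intro b hb
    simp only [A, B, mem_sdiff, Fintype.mem_piFinset, mem_Icc, not_forall] at hb
    obtain ⟨hA, j, hj⟩ := hb
    rw [mins_eq_of_apply_eq (by omega) (fun i => (hA i).1) (j := j) (by have := hA j; omega)]
    ring
  have hmass : ∑ b ∈ A \ B, muV p (m + 2) b = p ^ (c * (m + 1)) - p ^ (c * m) := by
    rw [sum_sdiff_eq_sub hBA, sum_piFinset_muV, sum_Icc_mu hp,
      Fintype.sum_piFinset_Icc_add_one 1 (m + 1)]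
    simp only [muV_add_one, sum_piFinset_muV, sum_Icc_mu hp, ← pow_mul, mul_comm c]
  rw [← sum_sdiff hBA, hB, sum_congr rfl hmins, ← mul_sum, hmass]
  have hpc : p ^ c ≠ 0 := pow_ne_zero c hp
  rw [mul_add, pow_add]
  field_simp
  ring

end

theorem shifting_lemma_general (p T : ℝ) (hp : 1 < p) (r c t : ℕ)
    (hr : 1 ≤ r) :
    ∑ b ∈ Fintype.piFinset (fun _ : Fin c => Icc 1 (r + 1)),
        muV p (r + 1) b * T ^ (-(t * mins (r + 1) b : ℤ)) =
      T ^ (-(t : ℤ)) *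
          ∑ b ∈ Fintype.piFinset (fun _ : Fin c => Icc 1 r),
            muV p r b * T ^ (-(t * mins r b : ℤ)) +
        T ^ (-(t : ℤ)) * p ^ (c * r) * (1 - ((p : ℝ) ^ c)⁻¹) := by
  have hpow : ∀ n : ℕ, T ^ (-(t * n : ℤ)) = (T ^ (-(t : ℤ))) ^ n := fun n => by
    rw [← zpow_natCast, ← zpow_mul, neg_mul]
  simp only [hpow]
  exact sum_muV_mul_pow_mins_succ (zero_lt_one.trans hp).ne' hr c _

/-- The shifting lemma:
`Σ_{b∈{1,…,r+1}^c} μ_p(r+1;b) T^{−t·min{r+1,b}}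
 = T^{−t} Σ_{b∈{1,…,r}^c} μ_p(r;b) T^{−t·min{r,b}} + T^{−t} p^{cr}(1 − p^{−c})`. -/
theorem shifting_lemma (p T : ℝ) (hp : 1 < p) (hT : T ≠ 0) (r c t : ℕ)
    (hr : 1 ≤ r) (hc : 1 ≤ c) (ht : 1 ≤ t) :
    ∑ b ∈ Fintype.piFinset (fun _ : Fin c => Icc 1 (r + 1)),
        muV p (r + 1) b * T ^ (-(t * mins (r + 1) b : ℤ)) =
      T ^ (-(t : ℤ)) *
          ∑ b ∈ Fintype.piFinset (fun _ : Fin c => Icc 1 r),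
            muV p r b * T ^ (-(t * mins r b : ℤ)) +
        T ^ (-(t : ℤ)) * p ^ (c * r) * (1 - ((p : ℝ) ^ c)⁻¹) :=
  shifting_lemma_general p T hp r c t hr
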